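/- Let (G,P,δ) be a symmetric homogeneous Garside structure of finite type; if k ≥ 2 assume in addition that the structure is square free. Suppose X = P⁻¹ x₁^k P with x₁ an atom, P ∈ 𝒫 (the positive monoid), inf P = 0 and ℓ(P) = n ≥ 1. Let B₁·…·B_n be the left normal form of P and define simple elements A_i by A_i δ^{i-1} B_i = δ^i for i = 1,…,n. Then either δ^{-n}·A_n·…·A₁·x₁^k·B₁·…·B_n is the left normal form of X, or there exist an atom x₂ conjugate to x₁ and Q in the positive monoid such that X = Q⁻¹ x₂^k Q, ‖Q‖ < ‖P‖ and ℓ(Q) ≤ ℓ(P). -/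

import Mathlib

/-- A Garside structure `(G, P, Δ)` on a group `G`: `P` is the submonoid of positive
elements, `Δ` the Garside element.  The axioms (G1)-(G4) are stated below:
the prefix relation `a ≼ b ⟺ a⁻¹b ∈ P` is a lattice order (with gcd `wedge` and
lcm `vee`), the simple elements `[1,Δ]` generate `G`, conjugation by `Δ` preserves `P`,
and every nontrivial positive element has finite letter length. -/
structure GarsideStructure (G : Type*) [Group G] where
  P : Set G
  one_mem : (1 : G) ∈ P
  mul_mem : ∀ {a b : G}, a ∈ P → b ∈ P → a * b ∈ P
  inter_inv : ∀ a : G, a ∈ P → a⁻¹ ∈ P → a = 1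
  Δ : G
  Δ_mem : Δ ∈ P
  wedge : G → G → G
  vee : G → G → G
  wedge_le_left : ∀ a b : G, (wedge a b)⁻¹ * a ∈ P
  wedge_le_right : ∀ a b : G, (wedge a b)⁻¹ * b ∈ P
  le_wedge : ∀ a b c : G, c⁻¹ * a ∈ P → c⁻¹ * b ∈ P → c⁻¹ * wedge a b ∈ P
  le_vee_left : ∀ a b : G, a⁻¹ * vee a b ∈ P
  le_vee_right : ∀ a b : G, b⁻¹ * vee a b ∈ P
  vee_le : ∀ a b c : G, a⁻¹ * c ∈ P → b⁻¹ * c ∈ P → (vee a b)⁻¹ * c ∈ P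
  simples_generate : Subgroup.closure {a : G | a ∈ P ∧ a⁻¹ * Δ ∈ P} = ⊤
  conj_mem : ∀ a : G, a ∈ P → Δ⁻¹ * a * Δ ∈ P
  len_bdd : ∀ X : G, X ∈ P → X ≠ 1 →
    BddAbove {k : ℕ | ∃ w : List G, w.length = k ∧ (∀ a ∈ w, a ∈ P ∧ a ≠ 1) ∧ w.prod = X}

namespace GarsideStructure

variable {G : Type*} [Group G] (S : GarsideStructure G)

/-- The prefix order `a ≼ b`. -/
def le (a b : G) : Prop := a⁻¹ * b ∈ S.P

/-- Strict prefix order `a ≺ b`. -/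
def lt (a b : G) : Prop := S.le a b ∧ a ≠ b

/-- The suffix relation `a ≽ b ⟺ ab⁻¹ ∈ P`. -/
def ges (a b : G) : Prop := a * b⁻¹ ∈ S.P

/-- Simple elements: the interval `[1, Δ]`. -/
def IsSimple (a : G) : Prop := a ∈ S.P ∧ S.le a S.Δ

/-- Atoms: elements of `P \ {1}` that are not products of two elements of `P \ {1}`. -/
def IsAtom' (a : G) : Prop := a ∈ S.P ∧ a ≠ 1 ∧
  ¬ ∃ b c : G, b ∈ S.P ∧ b ≠ 1 ∧ c ∈ S.P ∧ c ≠ 1 ∧ a = b * c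

/-- The letter length `‖X‖` of a positive element. -/
noncomputable def norm (X : G) : ℕ :=
  sSup {k : ℕ | ∃ w : List G, w.length = k ∧ (∀ a ∈ w, a ∈ S.P ∧ a ≠ 1) ∧ w.prod = X}

/-- Finite type: finitely many simple elements. -/
def FiniteType : Prop := {a : G | S.IsSimple a}.Finite

/-- Homogeneous: the letter length is additive on `P`. -/
def Homogeneous : Prop := ∀ X ∈ S.P, ∀ Y ∈ S.P, S.norm (X * Y) = S.norm X + S.norm Y

/-- Symmetric: for simple `u, v`, `u ≼ v ⟺ v ≽ u`. -/
def IsSymmetric : Prop := ∀ u v : G, S.IsSimple u → S.IsSimple v → (S.le u v ↔ S.ges v u)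

/-- Square free: no simple element contains the square of an atom. -/
def SquareFree : Prop := ∀ a : G, S.IsSimple a →
  ¬ ∃ U x V : G, U ∈ S.P ∧ S.IsAtom' x ∧ V ∈ S.P ∧ a = U * x ^ 2 * V

/-- The right complement `∂A = A⁻¹Δ`. -/
def dl (A : G) : G := A⁻¹ * S.Δ

/-- `τ(X) = Δ⁻¹XΔ`. -/
def tau (X : G) : G := S.Δ⁻¹ * X * S.Δ

/-- The product `A·B` of simple elements is left weighted if `A = (AB) ∧ Δ`. -/
def LeftWeighted (A B : G) : Prop := A = S.wedge (A * B) S.Δ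

/-- The gcd for the suffix order `≽` (derived from the lcm for `≼`). -/
def rwedge (a b : G) : G := (S.vee a⁻¹ b⁻¹)⁻¹

/-- The product `A·B` of simple elements is right weighted if `B = (AB) ∧̃ Δ`. -/
def RightWeighted (A B : G) : Prop := B = S.rwedge (A * B) S.Δ

end GarsideStructure
/-- A Garside structure together with the (unique) left normal form of each element:
`X = Δ^(nfInf X) · (nfWord X)`, where the factors of `nfWord X` are simple elements
different from `1` and `Δ` and each consecutive pair is left weighted. -/
structure GarsideStructureNF (G : Type*) [Group G] extends GarsideStructure G where
  nfInf : G → ℤ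
  nfWord : G → List G
  nf_factors : ∀ X : G, ∀ a ∈ nfWord X,
    toGarsideStructure.IsSimple a ∧ a ≠ 1 ∧ a ≠ Δ
  nf_chain : ∀ X : G, List.Chain' toGarsideStructure.LeftWeighted (nfWord X)
  nf_prod : ∀ X : G, X = Δ ^ nfInf X * (nfWord X).prod
  nf_unique : ∀ (X : G) (p : ℤ) (w : List G),
    (∀ a ∈ w, toGarsideStructure.IsSimple a ∧ a ≠ 1 ∧ a ≠ Δ) →
    List.Chain' toGarsideStructure.LeftWeighted w →
    X = Δ ^ p * w.prod → p = nfInf X ∧ w = nfWord X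

namespace GarsideStructureNF

variable {G : Type*} [Group G] (S : GarsideStructureNF G)

/-- The infimum `inf X` of `X`: the power of `Δ` in the left normal form. -/
def inf (X : G) : ℤ := S.nfInf X

/-- The canonical length `ℓ(X)`. -/
def ell (X : G) : ℕ := (S.nfWord X).length

/-- The initial factor `ι(X) = τ^{-p}(A₁)`. -/
def iota (X : G) : G := S.Δ ^ S.nfInf X * (S.nfWord X).headD 1 * S.Δ ^ (-S.nfInf X)

/-- The final factor `φ(X) = A_r`. -/
def phi (X : G) : G := (S.nfWord X).getLastD 1

/-- The preferred prefix `𝔭(X) = ι(X) ∧ ∂(φ(X))`. -/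
def pp (X : G) : G := S.wedge (S.iota X) ((S.phi X)⁻¹ * S.Δ)

/-- Cyclic sliding `𝔰(X) = 𝔭(X)⁻¹ X 𝔭(X)` (and `𝔰(X) = X` when `ℓ(X) = 0`). -/
def sliding (X : G) : G := if S.ell X = 0 then X else (S.pp X)⁻¹ * X * S.pp X

/-- Cycling `c(X) = ι(X)⁻¹ X ι(X)` (and `c(X) = X` when `ℓ(X) = 0`). -/
def cycling (X : G) : G := if S.ell X = 0 then X else (S.iota X)⁻¹ * X * S.iota X

/-- Decycling `d(X) = φ(X) X φ(X)⁻¹` (and `d(X) = X` when `ℓ(X) = 0`). -/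
def decycling (X : G) : G := if S.ell X = 0 then X else S.phi X * X * (S.phi X)⁻¹

/-- The set of sliding circuits `SC(X) = {Y ∈ X^G | 𝔰^m(Y) = Y for some m > 0}`. -/
def SC (X : G) : Set G := {Y : G | IsConj X Y ∧ ∃ m : ℕ, 0 < m ∧ S.sliding^[m] Y = Y}

/-- `s` is an SC-minimal conjugator for `X`. -/
def SCMinConj (X s : G) : Prop :=
  s ∈ S.P ∧ s ≠ 1 ∧ s⁻¹ * X * s ∈ S.SC X ∧
  ∀ t : G, S.lt 1 t → S.lt t s → t⁻¹ * X * t ∉ S.SC X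

/-- The summit infimum `inf_s X = max {inf Y | Y ∈ X^G}`. -/
noncomputable def infS (X : G) : ℤ := sSup {p : ℤ | ∃ Y : G, IsConj X Y ∧ p = S.nfInf Y}

/-- The summit length `ℓ_s(X) = min {ℓ(Y) | Y ∈ X^G}`. -/
noncomputable def ellS (X : G) : ℕ := sInf {r : ℕ | ∃ Y : G, IsConj X Y ∧ r = S.ell Y}

end GarsideStructureNF

/-!
Let `B` be the first factor of the left normal form of `P`. If `x₁ ≼ B`, conjugating by `x₁`
shortens `P`. If `∂x₁ ∧ B ≠ 1`, pick an atom `y ≼ ∂x₁ ∧ B`: then `x₁y` is simple and has `y` as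
a suffix, so by symmetry `y ≼ x₁y`, i.e. `x₂ = y⁻¹x₁y` is positive; it is an atom by
homogeneity, and `Q = y⁻¹P` is shorter than `P`. Otherwise all junctions of
`A_n ⋯ A₁ · x₁ ⋯ x₁ · B ⋯ B_n` are left weighted: `A₁ = ΔB⁻¹` and `x₁` because `B ∧ x₁ = 1`,
`x₁ x₁` by square freeness, `x₁ B` because `∂x₁ ∧ B = 1`, and `A_n ⋯ A₁` is the left normal
form of `Δⁿ P⁻¹`. The bound `ℓ(Q) ≤ ℓ(P)` holds because `Q ≼ Δ^ℓ(P)`, while `Y ≼ Δ^m` forces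
`inf Y + ℓ(Y) ≤ m`, which is again read off the normal form of `Δ^m Y⁻¹`.
-/

namespace GarsideStructure

variable {G : Type*} [Group G] (S : GarsideStructure G)

/-! ### The positive cone and its lattice operations -/

def positive : Submonoid G where
  carrier := S.P
  one_mem' := S.one_mem
  mul_mem' := S.mul_mem

@[simp] lemma mem_positive {a : G} : a ∈ S.positive ↔ a ∈ S.P := Iff.rfl

protected lemma le_refl (a : G) : S.le a a := by simpa [le] using S.one_mem

protected lemma le_trans {a b c : G} (hab : S.le a b) (hbc : S.le b c) : S.le a c := by
  simpa [le, mul_assoc] using S.mul_mem hab hbc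

protected lemma le_antisymm {a b : G} (hab : S.le a b) (hba : S.le b a) : a = b :=
  inv_mul_eq_one.mp (S.inter_inv _ hab (by simpa [le] using hba))

lemma one_le_iff {a : G} : S.le 1 a ↔ a ∈ S.P := by simp [le]

lemma le_mul_of_mem (a : G) {b : G} (hb : b ∈ S.P) : S.le a (a * b) := by simpa [le] using hb

lemma mul_le_mul_iff_left (a : G) {b c : G} : S.le (a * b) (a * c) ↔ S.le b c := by
  simp [le, mul_assoc]

lemma le_mul_iff_inv_mul_le (a : G) {b c : G} : S.le b (a * c) ↔ S.le (a⁻¹ * b) c := by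
  simp [le, mul_assoc]

lemma eq_one_of_le_one {a : G} (ha : a ∈ S.P) (h : S.le a 1) : a = 1 :=
  S.inter_inv a ha (by simpa [le] using h)

lemma list_prod_ne_one {w : List G} (hw : ∀ a ∈ w, a ∈ S.P ∧ a ≠ 1) (hne : w ≠ []) :
    w.prod ≠ 1 := by
  obtain ⟨a, t, rfl⟩ := List.exists_cons_of_ne_nil hne
  have ht : t.prod ∈ S.P := S.positive.list_prod_mem fun b hb => (hw b (by simp [hb])).1
  intro h
  refine (hw a (by simp)).2 (S.inter_inv a (hw a (by simp)).1 ?_)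
  rwa [inv_eq_of_mul_eq_one_right (by simpa using h)]

lemma wedge_eq_of_forall_le {a b c : G} (hca : S.le c a) (hcb : S.le c b)
    (h : ∀ d, S.le d a → S.le d b → S.le d c) : S.wedge a b = c :=
  S.le_antisymm (h _ (S.wedge_le_left a b) (S.wedge_le_right a b)) (S.le_wedge a b c hca hcb)

lemma wedge_comm (a b : G) : S.wedge a b = S.wedge b a :=
  S.wedge_eq_of_forall_le (S.wedge_le_right b a) (S.wedge_le_left b a)
    fun _ hda hdb => S.le_wedge b a _ hdb hda

lemma wedge_eq_left {a b : G} (h : S.le a b) : S.wedge a b = a :=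
  S.wedge_eq_of_forall_le (S.le_refl a) h fun _ hda _ => hda

lemma wedge_mem {a b : G} (ha : a ∈ S.P) (hb : b ∈ S.P) : S.wedge a b ∈ S.P :=
  S.one_le_iff.mp (S.le_wedge a b 1 (S.one_le_iff.mpr ha) (S.one_le_iff.mpr hb))

lemma mul_wedge (a b c : G) : a * S.wedge b c = S.wedge (a * b) (a * c) := by
  refine (S.wedge_eq_of_forall_le ((S.mul_le_mul_iff_left a).mpr (S.wedge_le_left b c))
    ((S.mul_le_mul_iff_left a).mpr (S.wedge_le_right b c)) fun d hdb hdc => ?_).symm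
  rw [S.le_mul_iff_inv_mul_le] at hdb hdc ⊢
  exact S.le_wedge b c _ hdb hdc

lemma leftWeighted_iff {a b : G} : S.LeftWeighted a b ↔ S.wedge (S.dl a) b = 1 := by
  rw [LeftWeighted, S.wedge_comm, ← left_eq_mul (a := a)]
  rw [S.mul_wedge, dl, mul_inv_cancel_left]

lemma isSimple_delta : S.IsSimple S.Δ := ⟨S.Δ_mem, S.le_refl _⟩

lemma isSimple_tau {a : G} (ha : S.IsSimple a) : S.IsSimple (S.tau a) := by
  refine ⟨S.conj_mem a ha.1, ?_⟩
  simpa [le, tau, mul_assoc] using S.conj_mem _ ha.2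

lemma isSimple_dl {a : G} (ha : S.IsSimple a) : S.IsSimple (S.dl a) := by
  refine ⟨ha.2, ?_⟩
  simpa [le, dl, mul_assoc] using S.conj_mem a ha.1

lemma isSimple_inv_mul {t u : G} (ht : S.IsSimple t) (htu : S.le t u) (hu : S.le u S.Δ) :
    S.IsSimple (t⁻¹ * u) :=
  ⟨htu, S.le_trans ((S.mul_le_mul_iff_left t⁻¹).mpr hu) (S.isSimple_dl ht).2⟩

/-! ### Conjugation by powers of `Δ` -/

section Automorphism

variable {φ : G ≃* G}

lemma le_map_iff (hφ : ∀ a, φ a ∈ S.P ↔ a ∈ S.P) {a b : G} : S.le (φ a) (φ b) ↔ S.le a b := by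
  simp only [le, ← map_inv, ← map_mul, hφ]

lemma map_wedge (hφ : ∀ a, φ a ∈ S.P ↔ a ∈ S.P) (a b : G) :
    φ (S.wedge a b) = S.wedge (φ a) (φ b) := by
  refine (S.wedge_eq_of_forall_le ((S.le_map_iff hφ).mpr (S.wedge_le_left a b))
    ((S.le_map_iff hφ).mpr (S.wedge_le_right a b)) fun d hda hdb => ?_).symm
  rw [← φ.apply_symm_apply d, S.le_map_iff hφ] at hda hdb ⊢
  exact S.le_wedge a b _ hda hdb

lemma isSimple_map_iff (hφ : ∀ a, φ a ∈ S.P ↔ a ∈ S.P) (hΔ : φ S.Δ = S.Δ) {a : G} :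
    S.IsSimple (φ a) ↔ S.IsSimple a := by
  unfold IsSimple
  conv_lhs => rw [hφ, ← hΔ, S.le_map_iff hφ]

lemma leftWeighted_map_iff (hφ : ∀ a, φ a ∈ S.P ↔ a ∈ S.P) (hΔ : φ S.Δ = S.Δ) {a b : G} :
    S.LeftWeighted (φ a) (φ b) ↔ S.LeftWeighted a b := by
  unfold LeftWeighted
  conv_lhs => rw [← map_mul, ← hΔ, ← S.map_wedge hφ]
  exact φ.injective.eq_iff

end Automorphism

/-- (G3) only says that `τ` maps simple elements to simple elements; finiteness makes it a
bijection of `[1, Δ]`, so that conjugation by `Δ` preserves `[1, Δ]` as well. -/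
lemma isSimple_conj_delta (hft : S.FiniteType) {a : G} (ha : S.IsSimple a) :
    S.IsSimple (MulAut.conj S.Δ a) := by
  have hbij : Set.BijOn S.tau {a | S.IsSimple a} {a | S.IsSimple a} :=
    (hft.injOn_iff_bijOn_of_mapsTo fun _ => S.isSimple_tau).mp
      fun x _ y _ h => by simpa [tau] using h
  obtain ⟨b, hb, rfl⟩ := hbij.surjOn ha
  simpa [tau, mul_assoc] using hb

lemma isSimple_conj_zpow_delta (hft : S.FiniteType) (j : ℤ) {a : G} (ha : S.IsSimple a) :
    S.IsSimple (MulAut.conj (S.Δ ^ j) a) := by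
  induction j using Int.induction_on generalizing a with
  | zero => simpa using ha
  | succ i ih =>
    rw [zpow_add_one, map_mul, MulAut.mul_apply]
    exact ih (S.isSimple_conj_delta hft ha)
  | pred i ih =>
    rw [zpow_sub_one, map_mul, MulAut.mul_apply]
    exact ih (by simpa [tau] using S.isSimple_tau ha)

lemma mem_closure_of_isSimple {a : G} (ha : S.IsSimple a) :
    a ∈ Submonoid.closure {a | S.IsSimple a} :=
  Submonoid.subset_closure ha

lemma closure_isSimple_le_positive : Submonoid.closure {a | S.IsSimple a} ≤ S.positive :=
  Submonoid.closure_le.mpr fun _ ha => ha.1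

lemma conj_zpow_delta_mem_closure (hft : S.FiniteType) (j : ℤ) {a : G}
    (ha : a ∈ Submonoid.closure {a | S.IsSimple a}) :
    MulAut.conj (S.Δ ^ j) a ∈ Submonoid.closure {a | S.IsSimple a} := by
  induction ha using Submonoid.closure_induction with
  | mem x hx => exact S.mem_closure_of_isSimple (S.isSimple_conj_zpow_delta hft j hx)
  | one => simp
  | mul x y _ _ hx hy => rw [map_mul]; exact Submonoid.mul_mem _ hx hy

lemma exists_inv_mul_delta_pow_mem_closure (hft : S.FiniteType) {u : G}
    (hu : u ∈ Submonoid.closure {a | S.IsSimple a}) :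
    ∃ r : ℕ, u⁻¹ * S.Δ ^ r ∈ Submonoid.closure {a | S.IsSimple a} := by
  induction hu using Submonoid.closure_induction with
  | mem x hx => exact ⟨1, by simpa [dl] using S.mem_closure_of_isSimple (S.isSimple_dl hx)⟩
  | one => exact ⟨0, by simp⟩
  | mul x y _ _ hx hy =>
    obtain ⟨r, hr⟩ := hx
    obtain ⟨s, hs⟩ := hy
    refine ⟨r + s, ?_⟩
    have h : (x * y)⁻¹ * S.Δ ^ (r + s) =
        y⁻¹ * S.Δ ^ s * MulAut.conj (S.Δ ^ (-(s : ℤ))) (x⁻¹ * S.Δ ^ r) := by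
      simp only [MulAut.conj_apply]; group
    rw [h]
    exact Submonoid.mul_mem _ hs (S.conj_zpow_delta_mem_closure hft _ hr)

lemma exists_delta_pow_mul_mem_closure (hft : S.FiniteType) (g : G) :
    ∃ m : ℕ, S.Δ ^ m * g ∈ Submonoid.closure {a | S.IsSimple a} := by
  have hg : g ∈ Subgroup.closure {a | S.IsSimple a} := by
    simp only [IsSimple, le, S.simples_generate, Subgroup.mem_top]
  induction hg using Subgroup.closure_induction with
  | mem x hx => exact ⟨0, by simpa using S.mem_closure_of_isSimple hx⟩
  | one => exact ⟨0, by simp⟩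
  | mul x y _ _ hx hy =>
    obtain ⟨m, hm⟩ := hx
    obtain ⟨m', hm'⟩ := hy
    refine ⟨m + m', ?_⟩
    have h : S.Δ ^ (m + m') * (x * y) =
        MulAut.conj (S.Δ ^ (m' : ℤ)) (S.Δ ^ m * x) * (S.Δ ^ m' * y) := by
      simp only [MulAut.conj_apply]; group
    rw [h]
    exact Submonoid.mul_mem _ (S.conj_zpow_delta_mem_closure hft _ hm) hm'
  | inv x _ hx =>
    obtain ⟨m, hm⟩ := hx
    obtain ⟨r, hr⟩ := S.exists_inv_mul_delta_pow_mem_closure hft hm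
    refine ⟨r, ?_⟩
    have h : S.Δ ^ r * x⁻¹ =
        MulAut.conj (S.Δ ^ (r : ℤ)) ((S.Δ ^ m * x)⁻¹ * S.Δ ^ r) * S.Δ ^ m := by
      simp only [MulAut.conj_apply]; group
    rw [h]
    exact Submonoid.mul_mem _ (S.conj_zpow_delta_mem_closure hft _ hr)
      (Submonoid.pow_mem _ (S.mem_closure_of_isSimple S.isSimple_delta) m)

lemma inv_mul_mem_closure_of_le {u : G} (hu : u ∈ Submonoid.closure {a | S.IsSimple a}) :
    ∀ {t : G}, S.IsSimple t → S.le t u → t⁻¹ * u ∈ Submonoid.closure {a | S.IsSimple a} := by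
  induction hu using Submonoid.closure_induction_left with
  | one => intro t ht htu; simp [S.eq_one_of_le_one ht.1 htu]
  | mul_left s hs v hv ih =>
    intro t ht htsv
    have hv' : v ∈ S.P := S.closure_isSimple_le_positive hv
    have hΔ : S.le (S.vee t s) S.Δ := S.vee_le t s S.Δ ht.2 hs.2
    have hsv : S.le (s⁻¹ * S.vee t s) v := by
      rw [← S.le_mul_iff_inv_mul_le]
      exact S.vee_le t s _ htsv (S.le_mul_of_mem s hv')
    have h : t⁻¹ * (s * v) = (t⁻¹ * S.vee t s) * ((s⁻¹ * S.vee t s)⁻¹ * v) := by group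
    rw [h]
    exact Submonoid.mul_mem _
      (S.mem_closure_of_isSimple (S.isSimple_inv_mul ht (S.le_vee_left t s) hΔ))
      (ih (S.isSimple_inv_mul hs (S.le_vee_right t s) hΔ) hsv)

lemma closure_isSimple_eq_positive (hft : S.FiniteType) :
    Submonoid.closure {a | S.IsSimple a} = S.positive := by
  refine le_antisymm S.closure_isSimple_le_positive fun Y hY => ?_
  obtain ⟨m, hm⟩ := S.exists_delta_pow_mul_mem_closure hft Y
  induction m with
  | zero => simpa using hm
  | succ m ih =>
    rw [pow_succ', mul_assoc] at hm
    have hΔ : S.le S.Δ (S.Δ * (S.Δ ^ m * Y)) :=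
      S.le_mul_of_mem _ (S.mul_mem (S.positive.pow_mem S.Δ_mem m) hY)
    exact ih (by simpa using S.inv_mul_mem_closure_of_le hm S.isSimple_delta hΔ)

lemma conj_zpow_delta_mem_iff (hft : S.FiniteType) (j : ℤ) (a : G) :
    MulAut.conj (S.Δ ^ j) a ∈ S.P ↔ a ∈ S.P := by
  have key : ∀ (j : ℤ) {a : G}, a ∈ S.P → MulAut.conj (S.Δ ^ j) a ∈ S.P := fun j a ha => by
    rw [← mem_positive, ← S.closure_isSimple_eq_positive hft] at ha ⊢
    exact S.conj_zpow_delta_mem_closure hft j ha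
  refine ⟨fun h => ?_, key j⟩
  simpa [← MulAut.mul_apply, ← map_mul, ← zpow_add] using key (-j) h

lemma conj_zpow_delta_delta (j : ℤ) : MulAut.conj (S.Δ ^ j) S.Δ = S.Δ := by
  rw [MulAut.conj_apply, (Commute.zpow_self S.Δ j).eq, mul_inv_cancel_right]

lemma exists_isSimple_le (hft : S.FiniteType) {Y : G} (hY : Y ∈ S.P) (hY1 : Y ≠ 1) :
    ∃ s, S.IsSimple s ∧ s ≠ 1 ∧ S.le s Y := by
  rw [← mem_positive, ← S.closure_isSimple_eq_positive hft] at hY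
  induction hY using Submonoid.closure_induction_left with
  | one => exact absurd rfl hY1
  | mul_left s hs v hv ih =>
    by_cases hs1 : s = 1
    · subst hs1
      obtain ⟨t, ht, ht1, htv⟩ := ih (by simpa using hY1)
      exact ⟨t, ht, ht1, by simpa using htv⟩
    · exact ⟨s, hs, hs1, S.le_mul_of_mem s (S.closure_isSimple_le_positive hv)⟩

/-! ### Letter length and atoms -/

lemma length_le_norm {w : List G} (hw : ∀ a ∈ w, a ∈ S.P ∧ a ≠ 1) :
    w.length ≤ S.norm w.prod := by
  rcases eq_or_ne w [] with rfl | hne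
  · simp
  exact le_csSup (S.len_bdd _ (S.positive.list_prod_mem fun a ha => (hw a ha).1)
    (S.list_prod_ne_one hw hne)) ⟨w, rfl, hw, rfl⟩

lemma one_le_norm {X : G} (hX : X ∈ S.P) (hX1 : X ≠ 1) : 1 ≤ S.norm X := by
  simpa using S.length_le_norm (w := [X]) (by simpa using ⟨hX, hX1⟩)

lemma exists_length_eq_norm {X : G} (hX : X ∈ S.P) (hX1 : X ≠ 1) :
    ∃ w : List G, w.length = S.norm X ∧ (∀ a ∈ w, a ∈ S.P ∧ a ≠ 1) ∧ w.prod = X := by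
  have h1 : 1 ∈ {k | ∃ w : List G, w.length = k ∧ (∀ a ∈ w, a ∈ S.P ∧ a ≠ 1) ∧ w.prod = X} :=
    ⟨[X], rfl, by simpa using ⟨hX, hX1⟩, by simp⟩
  exact Nat.sSup_mem ⟨1, h1⟩ (S.len_bdd X hX hX1)

lemma isAtom'_of_norm_eq_one {x : G} (hx : x ∈ S.P) (hx1 : x ≠ 1) (h : S.norm x = 1) :
    S.IsAtom' x := by
  refine ⟨hx, hx1, ?_⟩
  rintro ⟨b, c, hb, hb1, hc, hc1, rfl⟩
  have := S.length_le_norm (w := [b, c]) (by simp [*])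
  simp only [List.length_cons, List.length_nil, List.prod_cons, List.prod_nil, mul_one] at this
  omega

variable {S}

lemma IsAtom'.eq_one_or_eq_of_le {x c : G} (hx : S.IsAtom' x) (hc : c ∈ S.P) (h : S.le c x) :
    c = 1 ∨ c = x := by
  by_contra! hne
  exact hx.2.2 ⟨c, c⁻¹ * x, hc, hne.1, h, fun h' => hne.2 (inv_mul_eq_one.mp h'), by group⟩

lemma IsAtom'.length_le_one {w : List G} (hw : ∀ a ∈ w, a ∈ S.P ∧ a ≠ 1)
    (hx : S.IsAtom' w.prod) : w.length ≤ 1 := by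
  match w, hw, hx with
  | [], _, _ | [_], _, _ => simp
  | a :: b :: t, hw, hx =>
    have hbt : ∀ c ∈ b :: t, c ∈ S.P ∧ c ≠ 1 := fun c hc => hw c (List.mem_cons_of_mem a hc)
    exact (hx.2.2 ⟨a, (b :: t).prod, (hw a (by simp)).1, (hw a (by simp)).2,
      S.positive.list_prod_mem fun c hc => (hbt c hc).1, S.list_prod_ne_one hbt (by simp),
      List.prod_cons⟩).elim

lemma IsAtom'.norm_eq_one {x : G} (hx : S.IsAtom' x) : S.norm x = 1 := by
  obtain ⟨w, hlen, hw, rfl⟩ := S.exists_length_eq_norm hx.1 hx.2.1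
  have := hx.length_le_one hw
  have := S.one_le_norm hx.1 hx.2.1
  omega

lemma IsAtom'.isSimple (hft : S.FiniteType) {x : G} (hx : S.IsAtom' x) : S.IsSimple x := by
  obtain ⟨s, hs, hs1, hsx⟩ := S.exists_isSimple_le hft hx.1 hx.2.1
  obtain rfl := (hx.eq_one_or_eq_of_le hs.1 hsx).resolve_left hs1
  exact hs

lemma IsAtom'.ne_delta {x B : G} (hx : S.IsAtom' x) (hB : S.IsSimple B) (hB1 : B ≠ 1)
    (hBΔ : B ≠ S.Δ) : x ≠ S.Δ := by
  rintro rfl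
  exact (hx.eq_one_or_eq_of_le hB.1 hB.2).elim hB1 hBΔ

variable (S)

lemma exists_isAtom'_le {c : G} (hc : c ∈ S.P) (hc1 : c ≠ 1) : ∃ y, S.IsAtom' y ∧ S.le y c := by
  obtain ⟨w, hlen, hw, hwc⟩ := S.exists_length_eq_norm hc hc1
  obtain ⟨a, t, rfl⟩ := List.exists_cons_of_ne_nil (l := w) (by rintro rfl; exact hc1 hwc.symm)
  have ht : ∀ b ∈ t, b ∈ S.P ∧ b ≠ 1 := fun b hb => hw b (List.mem_cons_of_mem a hb)
  refine ⟨a, ⟨(hw a (by simp)).1, (hw a (by simp)).2, ?_⟩, ?_⟩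
  · rintro ⟨b, e, hb, hb1, he, he1, rfl⟩
    have hlong := S.length_le_norm (w := b :: e :: t)
      (by simpa [hb, hb1, he, he1] using ht)
    rw [show (b :: e :: t).prod = c by rw [← hwc]; simp [mul_assoc]] at hlong
    simp only [List.length_cons] at hlen hlong
    omega
  · rw [← hwc, List.prod_cons]
    exact S.le_mul_of_mem a (S.positive.list_prod_mem fun b hb => (ht b hb).1)

lemma norm_inv_mul_lt (hhom : S.Homogeneous) {y Z : G} (hy : y ∈ S.P) (hy1 : y ≠ 1)
    (hyZ : S.le y Z) : S.norm (y⁻¹ * Z) < S.norm Z := by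
  have h := hhom y hy _ hyZ
  rw [mul_inv_cancel_left] at h
  have := S.one_le_norm hy hy1
  omega

lemma isAtom'_conj (hhom : S.Homogeneous) {x y : G} (hx : S.IsAtom' x) (hy : y ∈ S.P)
    (hyx : y⁻¹ * x * y ∈ S.P) : S.IsAtom' (y⁻¹ * x * y) := by
  have h := hhom y hy _ hyx
  rw [show y * (y⁻¹ * x * y) = x * y by group, hhom x hx.1 y hy, hx.norm_eq_one] at h
  refine S.isAtom'_of_norm_eq_one hyx (fun h1 => hx.2.1 ?_) (by omega)
  simpa [mul_assoc] using congrArg (fun z => y * z * y⁻¹) h1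

/-- Symmetry turns the suffix `y` of the simple element `xy` into a prefix. -/
lemma inv_mul_mul_mem_of_le_dl (hsym : S.IsSymmetric) {x y : G} (hx : x ∈ S.P)
    (hy : S.IsSimple y) (hyx : S.le y (S.dl x)) : y⁻¹ * x * y ∈ S.P := by
  have hxy : S.IsSimple (x * y) := ⟨S.mul_mem hx hy.1, by simpa [le, dl, mul_assoc] using hyx⟩
  simpa [le, mul_assoc] using (hsym y (x * y) hy hxy).mpr (by simpa [ges] using hx)

/-! ### Left normal words and the dual word -/

def IsLeftNormal (w : List G) : Prop :=
  (∀ a ∈ w, S.IsSimple a ∧ a ≠ 1 ∧ a ≠ S.Δ) ∧ w.IsChain S.LeftWeighted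

lemma isLeftNormal_nil : S.IsLeftNormal [] := ⟨by simp, List.isChain_nil⟩

variable {S} in
lemma IsLeftNormal.map {w : List G} (hw : S.IsLeftNormal w)
    {φ : G ≃* G} (hφ : ∀ a, φ a ∈ S.P ↔ a ∈ S.P) (hΔ : φ S.Δ = S.Δ) :
    S.IsLeftNormal (w.map φ) := by
  refine ⟨fun a ha => ?_, (List.isChain_map _).mpr (hw.2.imp fun _ _ h =>
    (S.leftWeighted_map_iff hφ hΔ).mpr h)⟩
  obtain ⟨b, hb, rfl⟩ := List.mem_map.mp ha
  obtain ⟨hbs, hb1, hbΔ⟩ := hw.1 b hb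
  exact ⟨(S.isSimple_map_iff hφ hΔ).mpr hbs, φ.map_ne_one_iff.mpr hb1,
    hΔ ▸ φ.injective.ne hbΔ⟩

lemma wedge_prod_delta_of_isChain {a : G} {t : List G} (hs : ∀ x ∈ a :: t, S.IsSimple x)
    (hch : (a :: t).IsChain S.LeftWeighted) : S.wedge (a :: t).prod S.Δ = a := by
  induction t generalizing a with
  | nil => simpa using S.wedge_eq_left (hs a (by simp)).2
  | cons b t ih =>
    have hda := S.isSimple_dl (hs a (by simp))
    have hbt : (b :: t).prod ∈ S.P :=
      S.positive.list_prod_mem fun x hx => (hs x (List.mem_cons_of_mem a hx)).1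
    have hab : S.wedge (S.dl a) b = 1 := S.leftWeighted_iff.mp (List.isChain_cons_cons.mp hch).1
    have hb : S.wedge (b :: t).prod S.Δ = b :=
      ih (fun x hx => hs x (List.mem_cons_of_mem a hx)) (List.isChain_cons_cons.mp hch).2
    have hc : S.wedge (S.dl a) (b :: t).prod = 1 := by
      have hcb : S.le (S.wedge (S.dl a) (b :: t).prod) (S.wedge (b :: t).prod S.Δ) :=
        S.le_wedge _ _ _ (S.wedge_le_right _ _) (S.le_trans (S.wedge_le_left _ _) hda.2)
      rw [hb] at hcb
      refine S.eq_one_of_le_one (S.wedge_mem hda.1 hbt) ?_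
      rw [← hab]
      exact S.le_wedge _ _ _ (S.wedge_le_left _ _) hcb
    rw [List.prod_cons]
    exact (S.leftWeighted_iff.mpr hc).symm

/-- For `L = B₁ ⋯ Bₙ` this is `Aₙ ⋯ A₁` with `Aᵢ = Δⁱ Bᵢ⁻¹ Δ^(1-i)`, i.e. `Aᵢ Δ^(i-1) Bᵢ = Δⁱ`. -/
def dualWord : List G → List G
  | [] => []
  | B :: L => (dualWord L).map (MulAut.conj S.Δ) ++ [S.Δ * B⁻¹]

lemma dualWord_prod (L : List G) : (S.dualWord L).prod = S.Δ ^ L.length * L.prod⁻¹ := by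
  induction L with
  | nil => simp [dualWord]
  | cons B L ih =>
    rw [dualWord, List.prod_append, ← map_list_prod, ih]
    simp only [MulAut.conj_apply, List.length_cons, List.prod_cons, List.prod_nil, mul_one]
    group

lemma ofFn_reverse_eq_dualWord : ∀ (L : List G) (A : Fin L.length → G),
    (∀ i : Fin L.length, A i * S.Δ ^ (i : ℕ) * L.getD i 1 = S.Δ ^ ((i : ℕ) + 1)) →
    (List.ofFn A).reverse = S.dualWord L
  | [], _, _ => rfl
  | B :: L, A, hA => by
    have hA0 : A 0 = S.Δ * B⁻¹ := eq_mul_inv_of_mul_eq (by simpa using hA 0)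
    have hL := ofFn_reverse_eq_dualWord L (fun i => MulAut.conj S.Δ⁻¹ (A i.succ)) fun i => by
      have h := hA i.succ
      simp only [Fin.val_succ, List.getD_cons_succ] at h
      simp only [MulAut.conj_apply, inv_inv]
      calc _ = S.Δ⁻¹ * (A i.succ * S.Δ ^ ((i : ℕ) + 1) * L.getD i 1) := by group
        _ = _ := by rw [h]; group
    rw [List.ofFn_succ, List.reverse_cons, dualWord, ← hL, List.map_reverse, List.map_ofFn, hA0]
    congr
    funext i
    simp only [Function.comp_apply, MulAut.conj_apply]
    group

variable {S} in
lemma IsLeftNormal.dualWord (hft : S.FiniteType) {L : List G} (hL : S.IsLeftNormal L) :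
    S.IsLeftNormal (S.dualWord L) := by
  have hφ : ∀ a, MulAut.conj S.Δ a ∈ S.P ↔ a ∈ S.P := by
    simpa only [zpow_one] using S.conj_zpow_delta_mem_iff hft 1
  have hΔ : MulAut.conj S.Δ S.Δ = S.Δ := by simp
  have hdual : ∀ B, S.Δ * B⁻¹ = MulAut.conj S.Δ (S.dl B) := fun B => by
    simp only [dl, MulAut.conj_apply]; group
  induction L with
  | nil => exact S.isLeftNormal_nil
  | cons B L ih =>
    have hL' : S.IsLeftNormal L := ⟨fun a ha => hL.1 a (List.mem_cons_of_mem B ha), hL.2.tail⟩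
    have hmap := (ih hL').map hφ hΔ
    obtain ⟨hBs, hB1, hBΔ⟩ := hL.1 B (by simp)
    refine ⟨fun a ha => ?_, List.isChain_append.mpr ⟨hmap.2, List.isChain_singleton _, ?_⟩⟩
    · rcases List.mem_append.mp ha with ha | ha
      · exact hmap.1 a ha
      obtain rfl := List.mem_singleton.mp ha
      refine ⟨?_, fun h => hBΔ (mul_inv_eq_one.mp h).symm, fun h => hB1 ?_⟩
      · rw [hdual]
        exact (S.isSimple_map_iff hφ hΔ).mpr (S.isSimple_dl hBs)
      · simpa using h
    · cases L with
      | nil => simp [GarsideStructure.dualWord]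
      | cons C L =>
        simp only [GarsideStructure.dualWord, List.map_append, List.map_cons, List.map_nil,
          List.getLast?_append, List.getLast?_singleton, Option.some_or, Option.mem_def,
          Option.some.injEq, List.head?_cons, forall_eq']
        rw [S.leftWeighted_iff]
        have e1 : S.dl (MulAut.conj S.Δ (S.Δ * C⁻¹)) = MulAut.conj S.Δ C := by
          simp only [dl, MulAut.conj_apply]; group
        rw [e1, hdual, ← S.map_wedge hφ, S.wedge_comm,
          S.leftWeighted_iff.mp (List.isChain_cons_cons.mp hL.2).1, map_one]

lemma leftWeighted_delta_mul_inv_of_not_le {x B : G} (hx : S.IsAtom' x) (hB : B ∈ S.P)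
    (hxB : ¬ S.le x B) : S.LeftWeighted (S.Δ * B⁻¹) x := by
  rw [leftWeighted_iff, show S.dl (S.Δ * B⁻¹) = B by simp [dl]]
  refine (hx.eq_one_or_eq_of_le (S.wedge_mem hB hx.1) (S.wedge_le_right B x)).resolve_right
    fun h => hxB ?_
  exact h ▸ S.wedge_le_left B x

lemma leftWeighted_self_of_squareFree (hft : S.FiniteType) (hsf : S.SquareFree) {x : G}
    (hx : S.IsAtom' x) : S.LeftWeighted x x := by
  rw [leftWeighted_iff]
  refine (hx.eq_one_or_eq_of_le (S.wedge_mem (S.isSimple_dl (hx.isSimple hft)).1 hx.1)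
    (S.wedge_le_right _ _)).resolve_right fun h => ?_
  have hxx : S.le (S.wedge (S.dl x) x) (S.dl x) := S.wedge_le_left _ _
  rw [h] at hxx
  refine hsf S.Δ S.isSimple_delta ⟨1, x, (x ^ 2)⁻¹ * S.Δ, S.one_mem, hx, ?_, by group⟩
  simpa [le, dl, pow_two, mul_assoc] using hxx

lemma isLeftNormal_dualWord_append_replicate (hft : S.FiniteType) {x B : G} {L : List G}
    {k : ℕ} (hk : 1 ≤ k) (hx : S.IsAtom' x) (hxx : 2 ≤ k → S.LeftWeighted x x)
    (hBL : S.IsLeftNormal (B :: L)) (hxB : ¬ S.le x B) (hdxB : S.wedge (S.dl x) B = 1) :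
    S.IsLeftNormal (S.dualWord (B :: L) ++ List.replicate k x ++ B :: L) := by
  obtain ⟨hBs, hB1, hBΔ⟩ := hBL.1 B (by simp)
  have hD := hBL.dualWord hft
  obtain ⟨k, rfl⟩ := Nat.exists_eq_add_of_le' hk
  refine ⟨fun a ha => ?_, ?_⟩
  · simp only [List.mem_append, List.mem_replicate] at ha
    rcases ha with (ha | ⟨-, rfl⟩) | ha
    · exact hD.1 a ha
    · exact ⟨hx.isSimple hft, hx.2.1, hx.ne_delta hBs hB1 hBΔ⟩
    · exact hBL.1 a ha
  have hrep : (List.replicate (k + 1) x).IsChain S.LeftWeighted := by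
    rcases Nat.eq_zero_or_pos k with rfl | hk
    · exact List.isChain_singleton x
    · exact List.isChain_replicate_of_rel _ (hxx (by omega))
  refine List.isChain_append.mpr ⟨List.isChain_append.mpr ⟨hD.2, hrep, ?_⟩, hBL.2, ?_⟩
  · simp only [dualWord, List.getLast?_append, List.getLast?_singleton, Option.some_or,
      Option.mem_def, Option.some.injEq, List.replicate_succ, List.head?_cons, forall_eq']
    exact S.leftWeighted_delta_mul_inv_of_not_le hx hBs.1 hxB
  · simp only [List.getLast?_append, List.getLast?_replicate, List.head?_cons, Option.mem_def,
      Option.some.injEq, forall_eq']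
    simpa [S.leftWeighted_iff] using hdxB

end GarsideStructure

namespace GarsideStructureNF

open GarsideStructure

variable {G : Type*} [Group G] (S : GarsideStructureNF G)

lemma isLeftNormal_nfWord (X : G) : S.IsLeftNormal (S.nfWord X) := ⟨S.nf_factors X, S.nf_chain X⟩

lemma nf_eq_of_isLeftNormal {X : G} {p : ℤ} {w : List G} (hw : S.IsLeftNormal w)
    (hX : X = S.Δ ^ p * w.prod) : S.nfInf X = p ∧ S.nfWord X = w :=
  (S.nf_unique X p w hw.1 hw.2 hX).imp Eq.symm Eq.symm

lemma delta_ne_one : S.Δ ≠ 1 := fun h => by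
  have h0 := (S.nf_eq_of_isLeftNormal (X := 1) (p := 0) S.isLeftNormal_nil (by simp)).1
  have h1 := (S.nf_eq_of_isLeftNormal (X := 1) (p := 1) S.isLeftNormal_nil (by simp [h])).1
  omega

lemma nonneg_of_delta_zpow_mul_mem {p : ℤ} {w : List G} (hw : S.IsLeftNormal w)
    (hY : S.Δ ^ p * w.prod ∈ S.P) : 0 ≤ p := by
  by_contra! hp
  obtain ⟨m, hm⟩ := Int.eq_ofNat_of_zero_le (by omega : 0 ≤ -p - 1)
  have hΔw : S.le S.Δ w.prod := by
    have h : S.Δ⁻¹ * w.prod = S.Δ ^ m * (S.Δ ^ p * w.prod) := by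
      rw [← zpow_natCast, ← hm]; group
    rw [le, h]
    exact S.mul_mem (S.positive.pow_mem S.Δ_mem m) hY
  cases w with
  | nil => exact S.delta_ne_one (S.eq_one_of_le_one S.Δ_mem (by simpa using hΔw))
  | cons a t =>
    have ha := hw.1 a (by simp)
    have hΔa : S.le S.Δ (S.wedge (a :: t).prod S.Δ) := S.le_wedge _ _ _ hΔw (S.le_refl _)
    rw [S.wedge_prod_delta_of_isChain (fun x hx => (hw.1 x hx).1) hw.2] at hΔa
    exact ha.2.2 (S.le_antisymm ha.1.2 hΔa)

lemma le_of_nfWord_eq_cons {Z B : G} {L : List G} (hZ : S.nfInf Z = 0)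
    (hBL : S.nfWord Z = B :: L) : S.le B Z := by
  have hL : ∀ a ∈ L, a ∈ S.P := fun a ha => (S.nf_factors Z a (by simp [hBL, ha])).1.1
  rw [S.nf_prod Z, hZ, hBL, zpow_zero, one_mul, List.prod_cons]
  exact S.le_mul_of_mem B (S.positive.list_prod_mem hL)

lemma nfInf_nonneg {Y : G} (hY : Y ∈ S.P) : 0 ≤ S.nfInf Y :=
  S.nonneg_of_delta_zpow_mul_mem (S.isLeftNormal_nfWord Y) (S.nf_prod Y ▸ hY)

/-- `Δ^m Y⁻¹ = Δ^(m - inf Y - ℓ(Y)) · τ^(-inf Y)(A_ℓ ⋯ A₁)` is a left normal form, and it is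
positive. -/
lemma nfInf_add_ell_le (hft : S.FiniteType) {Y : G} {m : ℤ} (hY : S.le Y (S.Δ ^ m)) :
    S.nfInf Y + S.ell Y ≤ m := by
  suffices ∀ (p : ℤ) L, S.IsLeftNormal L → Y = S.Δ ^ p * L.prod → p + L.length ≤ m from
    this _ _ (S.isLeftNormal_nfWord Y) (S.nf_prod Y)
  rintro p L hL rfl
  have hV : S.Δ ^ m * (S.Δ ^ p * L.prod)⁻¹ ∈ S.P := by
    simpa only [MulAut.conj_apply, mul_assoc, mul_inv_cancel, mul_one] using
      (S.conj_zpow_delta_mem_iff hft m _).mpr hY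
  have hw := (hL.dualWord hft).map (S.conj_zpow_delta_mem_iff hft p) (S.conj_zpow_delta_delta p)
  have h : S.Δ ^ m * (S.Δ ^ p * L.prod)⁻¹ =
      S.Δ ^ (m - L.length - p) * ((S.dualWord L).map (MulAut.conj (S.Δ ^ p))).prod := by
    rw [← map_list_prod, dualWord_prod, MulAut.conj_apply, ← zpow_natCast]
    group
  have := S.nonneg_of_delta_zpow_mul_mem hw (h ▸ hV)
  omega

lemma le_delta_zpow_nfInf_add_ell (hft : S.FiniteType) (Y : G) :
    S.le Y (S.Δ ^ (S.nfInf Y + S.ell Y)) := by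
  suffices ∀ (p : ℤ) L, S.IsLeftNormal L → Y = S.Δ ^ p * L.prod → S.le Y (S.Δ ^ (p + L.length)) from
    this (S.nfInf Y) (S.nfWord Y) (S.isLeftNormal_nfWord Y) (S.nf_prod Y)
  rintro p L hL rfl
  have hD : (S.dualWord L).prod ∈ S.P :=
    S.positive.list_prod_mem fun a ha => ((hL.dualWord hft).1 a ha).1.1
  have h : (S.Δ ^ p * L.prod)⁻¹ * S.Δ ^ (p + L.length) =
      MulAut.conj (S.Δ ^ (-(L.length : ℤ))) (S.dualWord L).prod := by
    rw [dualWord_prod, MulAut.conj_apply, ← zpow_natCast]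
    group
  rw [le, h]
  exact (S.conj_zpow_delta_mem_iff hft _ _).mpr hD

lemma ell_inv_mul_le (hft : S.FiniteType) {y Z : G} (hZ : S.nfInf Z = 0) (hy : y ∈ S.P)
    (hyZ : S.le y Z) : S.ell (y⁻¹ * Z) ≤ S.ell Z := by
  have hZΔ := S.le_delta_zpow_nfInf_add_ell hft Z
  rw [hZ, zero_add] at hZΔ
  have h : (y⁻¹ * Z)⁻¹ * S.Δ ^ (S.ell Z : ℤ) =
      Z⁻¹ * S.Δ ^ (S.ell Z : ℤ) * MulAut.conj (S.Δ ^ (-(S.ell Z : ℤ))) y := by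
    simp only [MulAut.conj_apply]; group
  have hle : S.le (y⁻¹ * Z) (S.Δ ^ (S.ell Z : ℤ)) := by
    rw [le, h]
    exact S.mul_mem hZΔ ((S.conj_zpow_delta_mem_iff hft _ _).mpr hy)
  have := S.nfInf_add_ell_le hft hle
  have := S.nfInf_nonneg hyZ
  omega

lemma exists_shorter_conjugator (hft : S.FiniteType) (hhom : S.Homogeneous) (k : ℕ)
    {x y Z : G} (hx : S.IsAtom' x) (hy : y ∈ S.P) (hy1 : y ≠ 1) (hyZ : S.le y Z)
    (hyx : y⁻¹ * x * y ∈ S.P) (hZ : S.nfInf Z = 0) :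
    ∃ x₂ Q : G, S.IsAtom' x₂ ∧ IsConj x x₂ ∧ Q ∈ S.P ∧ Z⁻¹ * x ^ k * Z = Q⁻¹ * x₂ ^ k * Q ∧
      S.norm Q < S.norm Z ∧ S.ell Q ≤ S.ell Z := by
  refine ⟨y⁻¹ * x * y, y⁻¹ * Z, S.isAtom'_conj hhom hx hy hyx, isConj_iff.mpr ⟨y⁻¹, by group⟩,
    hyZ, ?_, S.norm_inv_mul_lt hhom hy hy1 hyZ, S.ell_inv_mul_le hft hZ hy hyZ⟩
  rw [show y⁻¹ * x * y = MulAut.conj y⁻¹ x by simp, ← map_pow, MulAut.conj_apply]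
  group

end GarsideStructureNF

theorem statement10_general {G : Type*} [Group G] (S : GarsideStructureNF G)
    (hft : S.FiniteType) (hsym : S.IsSymmetric) (hhom : S.Homogeneous)
    (k : ℕ) (hk : 1 ≤ k) (hsf : 2 ≤ k → S.SquareFree)
    (x₁ : G) (hx₁ : S.IsAtom' x₁)
    (Pp X : G) (hPinf : S.nfInf Pp = 0)
    (n : ℕ) (hn : 1 ≤ n) (hPlen : (S.nfWord Pp).length = n)
    (hX : X = Pp⁻¹ * x₁ ^ k * Pp)
    (A : Fin n → G)
    (hA : ∀ i : Fin n, A i * S.Δ ^ (i : ℕ) * (S.nfWord Pp).getD (i : ℕ) 1 =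
      S.Δ ^ ((i : ℕ) + 1)) :
    (S.nfInf X = -(n : ℤ) ∧
      S.nfWord X = (List.ofFn A).reverse ++ List.replicate k x₁ ++ S.nfWord Pp) ∨
    (∃ x₂ Q : G, S.IsAtom' x₂ ∧ IsConj x₁ x₂ ∧ Q ∈ S.P ∧ X = Q⁻¹ * x₂ ^ k * Q ∧
      S.norm Q < S.norm Pp ∧ S.ell Q ≤ S.ell Pp) := by
  subst hX hPlen
  have hP : Pp = (S.nfWord Pp).prod := by simpa [hPinf] using S.nf_prod Pp
  rw [S.ofFn_reverse_eq_dualWord _ A hA]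
  obtain ⟨B, L, hBL⟩ := List.exists_cons_of_length_pos hn
  have hnf : S.IsLeftNormal (B :: L) := hBL ▸ S.isLeftNormal_nfWord Pp
  have hBs := (hnf.1 B (by simp)).1
  have hBP := S.le_of_nfWord_eq_cons hPinf hBL
  by_cases hxB : S.le x₁ B
  · exact .inr (S.exists_shorter_conjugator hft hhom k hx₁ hx₁.1 hx₁.2.1 (S.le_trans hxB hBP)
      (by simpa using hx₁.1) hPinf)
  by_cases hdxB : S.wedge (S.dl x₁) B = 1
  · refine .inl (S.nf_eq_of_isLeftNormal ?_ ?_)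
    · rw [hBL]
      exact S.isLeftNormal_dualWord_append_replicate hft hk hx₁
        (fun h => S.leftWeighted_self_of_squareFree hft (hsf h) hx₁) hnf hxB hdxB
    · rw [List.prod_append, List.prod_append, S.dualWord_prod, ← hP, List.prod_replicate,
        zpow_neg, zpow_natCast]
      group
  obtain ⟨y, hy, hyle⟩ :=
    S.exists_isAtom'_le (S.wedge_mem (S.isSimple_dl (hx₁.isSimple hft)).1 hBs.1) hdxB
  exact .inr (S.exists_shorter_conjugator hft hhom k hx₁ hy.1 hy.2.1
    (S.le_trans (S.le_trans hyle (S.wedge_le_right _ _)) hBP)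
    (S.inv_mul_mul_mem_of_le_dl hsym hx₁.1 (hy.isSimple hft)
      (S.le_trans hyle (S.wedge_le_left _ _))) hPinf)

/-- **Lemma 3.2** (Orevkov): in a symmetric homogeneous Garside structure of finite type
(square free when `k ≥ 2`), let `X = P⁻¹ x₁^k P` with `x₁` an atom, `P` positive,
`inf P = 0`, `ℓ(P) = n ≥ 1`; let `B₁ ⋯ B_n` be the left normal form of `P` and define
`A_i` by `A_i δ^{i-1} B_i = δ^i`.  Then either `δ^{-n} · A_n ⋯ A₁ · x₁^k · B₁ ⋯ B_n` is
the left normal form of `X`, or `X = Q⁻¹ x₂^k Q` for an atom `x₂` conjugate to `x₁` and a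
positive `Q` with `‖Q‖ < ‖P‖` and `ℓ(Q) ≤ ℓ(P)`. -/
theorem statement10 {G : Type*} [Group G] (S : GarsideStructureNF G)
    (hft : S.FiniteType) (hsym : S.IsSymmetric) (hhom : S.Homogeneous)
    (k : ℕ) (hk : 1 ≤ k) (hsf : 2 ≤ k → S.SquareFree)
    (x₁ : G) (hx₁ : S.IsAtom' x₁)
    (Pp X : G) (hPmem : Pp ∈ S.P) (hPinf : S.nfInf Pp = 0)
    (n : ℕ) (hn : 1 ≤ n) (hPlen : (S.nfWord Pp).length = n)
    (hX : X = Pp⁻¹ * x₁ ^ k * Pp)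
    (A : Fin n → G)
    (hA : ∀ i : Fin n, A i * S.Δ ^ (i : ℕ) * (S.nfWord Pp).getD (i : ℕ) 1 =
      S.Δ ^ ((i : ℕ) + 1)) :
    (S.nfInf X = -(n : ℤ) ∧
      S.nfWord X = (List.ofFn A).reverse ++ List.replicate k x₁ ++ S.nfWord Pp) ∨
    (∃ x₂ Q : G, S.IsAtom' x₂ ∧ IsConj x₁ x₂ ∧ Q ∈ S.P ∧ X = Q⁻¹ * x₂ ^ k * Q ∧
      S.norm Q < S.norm Pp ∧ S.ell Q ≤ S.ell Pp) :=
  statement10_general S hft hsym hhom k hk hsf x₁ hx₁ Pp X hPinf n hn hPlen hX A hA
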